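/- Let p₁ ∈ ℂ with p₁ ≠ 0 and Re(p₁) ≠ 0, and let α₁⁽¹⁾, α₁⁽²⁾ ∈ ℂ. Define η₁(y,s) = p₁ y + s/p₁ and the functions f(y,s) = −1 − ((|α₁⁽¹⁾|² + |α₁⁽²⁾|²) |p₁|⁴ / (4 (p₁ + conj(p₁))²)) e^{η₁ + conj(η₁)}, g₁(y,s) = −α₁⁽¹⁾ e^{η₁}, g₂(y,s) = −α₁⁽²⁾ e^{η₁}. Then f is real-valued and for all (y,s) ∈ ℝ²: f_{sy} g_i − f_s g_{i,y} − f_y g_{i,s} + f g_{i,sy} = f·g_i for i = 1,2, and f f_{ss} − f_s² = (1/4)(|g₁|² + |g₂|²). -/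

import Mathlib

/-
Every function involved is of the form `d + c * exp (a * y + b * s)`, and partial derivatives act
on such a function by multiplying its exponential part by `a` or `b`. The bilinear forms therefore
collapse to algebraic identities in the exponents. With `η₁ + conj η₁ = q y + r s`, where
`q = p₁ + conj p₁` and `r = 1/p₁ + 1/conj p₁`, the `D_s D_y` equation amounts to
`(q - p₁)(r - 1/p₁) = p₁ · (1/p₁) = 1`, and the `D_s²` equation to `C r² = A / 4` for the
amplitude `C = A |p₁|⁴ / (4 q²)` of `f`, which holds because `r = q / |p₁|²`.
-/

open Complex

/-- Partial derivative in the first variable (`y`) of a complex-valued function. -/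
noncomputable def pdyC (F : ℝ → ℝ → ℂ) (y s : ℝ) : ℂ := deriv (fun y' => F y' s) y

/-- Partial derivative in the second variable (`s`) of a complex-valued function. -/
noncomputable def pdsC (F : ℝ → ℝ → ℂ) (y s : ℝ) : ℂ := deriv (fun s' => F y s') s

open ComplexConjugate

noncomputable def expWave (d c a b : ℂ) (y s : ℝ) : ℂ := d + c * exp (a * y + b * s)

lemma hasDerivAt_const_add_mul_exp (d c a b : ℂ) (t : ℝ) :
    HasDerivAt (fun t : ℝ => d + c * exp (a * t + b)) (c * a * exp (a * t + b)) t := by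
  have := ((((ofRealCLM.hasDerivAt (x := t)).const_mul a).add_const b).cexp.const_mul c).const_add d
  simpa [mul_comm, mul_left_comm, mul_assoc] using this

lemma pdyC_expWave (d c a b : ℂ) : pdyC (expWave d c a b) = expWave 0 (c * a) a b := by
  ext y s
  simp only [pdyC, expWave, (hasDerivAt_const_add_mul_exp d c a (b * s) y).deriv, zero_add]

lemma pdsC_expWave (d c a b : ℂ) : pdsC (expWave d c a b) = expWave 0 (c * b) a b := by
  ext y s
  simp only [pdsC, expWave, add_comm (a * (y : ℂ)),
    (hasDerivAt_const_add_mul_exp d c b (a * y) s).deriv, zero_add]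

lemma expWave_bilinear_DsDy {d c a₁ b₁ k a₂ b₂ : ℂ} (h₁ : (a₁ - a₂) * (b₁ - b₂) = 1)
    (h₂ : a₂ * b₂ = 1) (y s : ℝ) :
    pdyC (pdsC (expWave d c a₁ b₁)) y s * expWave 0 k a₂ b₂ y s
        - pdsC (expWave d c a₁ b₁) y s * pdyC (expWave 0 k a₂ b₂) y s
        - pdyC (expWave d c a₁ b₁) y s * pdsC (expWave 0 k a₂ b₂) y s
        + expWave d c a₁ b₁ y s * pdyC (pdsC (expWave 0 k a₂ b₂)) y s
      = expWave d c a₁ b₁ y s * expWave 0 k a₂ b₂ y s := by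
  simp only [pdyC_expWave, pdsC_expWave, expWave]
  linear_combination c * k * exp (a₁ * y + b₁ * s) * exp (a₂ * y + b₂ * s) * h₁
    + d * k * exp (a₂ * y + b₂ * s) * h₂

lemma expWave_bilinear_Ds2 (d c a b : ℂ) (y s : ℝ) :
    expWave d c a b y s * pdsC (pdsC (expWave d c a b)) y s - pdsC (expWave d c a b) y s ^ 2
      = d * c * b ^ 2 * exp (a * y + b * s) := by
  simp only [pdsC_expWave, expWave]
  ring

lemma ofReal_norm_mul_exp_sq (c z : ℂ) :
    (‖c * exp z‖ : ℂ) ^ 2 = (‖c‖ : ℂ) ^ 2 * exp (z + conj z) := by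
  rw [norm_mul, ofReal_mul, mul_pow, ← mul_conj' (exp z), ← exp_conj, exp_add]

lemma add_conj_mul_add_inv_add_inv_conj (p : ℂ) (y s : ℝ) :
    p * y + s / p + conj (p * y + s / p) = (p + conj p) * y + (p⁻¹ + (conj p)⁻¹) * s := by
  simp only [map_add, map_mul, map_div₀, conj_ofReal]
  ring

lemma norm_pow_four_div_mul_inv_add_inv_sq {p : ℂ} (hp : p ≠ 0) (hq : p + conj p ≠ 0) :
    (‖p‖ : ℂ) ^ 4 / (4 * (p + conj p) ^ 2) * (p⁻¹ + (conj p)⁻¹) ^ 2 = 1 / 4 := by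
  have hpc : conj p ≠ 0 := (map_ne_zero _).mpr hp
  rw [show (‖p‖ : ℂ) ^ 4 = (p * conj p) ^ 2 by rw [mul_conj', ← pow_mul]]
  field_simp
  ring

theorem ccsp_one_soliton_tau
    (p₁ : ℂ) (hp₁ : p₁ ≠ 0) (hre : p₁.re ≠ 0)
    (α₁ α₂ : ℂ)
    (η₁ : ℝ → ℝ → ℂ) (hη₁ : ∀ y s, η₁ y s = p₁ * (y : ℂ) + (s : ℂ) / p₁)
    (f g₁ g₂ : ℝ → ℝ → ℂ)
    (hf : ∀ y s, f y s = -1 -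
      (((‖α₁‖ : ℂ)^2 + (‖α₂‖ : ℂ)^2) * (‖p₁‖ : ℂ)^4
          / (4 * (p₁ + starRingEnd ℂ p₁)^2))
        * Complex.exp (η₁ y s + starRingEnd ℂ (η₁ y s)))
    (hg₁ : ∀ y s, g₁ y s = -α₁ * Complex.exp (η₁ y s))
    (hg₂ : ∀ y s, g₂ y s = -α₂ * Complex.exp (η₁ y s)) :
    (∀ y s, (f y s).im = 0) ∧
    (∀ y s,
      (∀ g, (g = g₁ ∨ g = g₂) →
        pdyC (pdsC f) y s * g y s - pdsC f y s * pdyC g y s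
          - pdyC f y s * pdsC g y s + f y s * pdyC (pdsC g) y s
        = f y s * g y s)
      ∧ (f y s * pdsC (pdsC f) y s - (pdsC f y s)^2
        = (1/4) * ((‖g₁ y s‖ : ℂ)^2 + (‖g₂ y s‖ : ℂ)^2))) := by
  refine ⟨fun y s => ?_, fun y s => ?_⟩
  -- `z + conj z = 2 * z.re` turns every factor of `f y s` into the cast of a real number
  · rw [hf, add_conj, add_conj]
    norm_cast
  set q := p₁ + conj p₁
  set r := p₁⁻¹ + (conj p₁)⁻¹
  set A := (‖α₁‖ : ℂ) ^ 2 + (‖α₂‖ : ℂ) ^ 2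
  have hq : q ≠ 0 := by
    simp only [q, add_conj]
    exact_mod_cast mul_ne_zero two_ne_zero hre
  have hθ : ∀ y s, η₁ y s + conj (η₁ y s) = q * y + r * s := fun y s => by
    rw [hη₁, add_conj_mul_add_inv_add_inv_conj]
  have hf_wave : f = expWave (-1) (-(A * (‖p₁‖ : ℂ) ^ 4 / (4 * q ^ 2))) q r := by
    ext y s
    rw [hf, hθ, expWave]
    ring
  have hg_wave : ∀ α g, (∀ y s, g y s = -α * exp (η₁ y s)) → g = expWave 0 (-α) p₁ p₁⁻¹ :=
    fun α g hg => by
      ext y s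
      rw [hg, hη₁, expWave, div_eq_inv_mul, zero_add]
  constructor
  · have hshift : (q - p₁) * (r - p₁⁻¹) = 1 := by
      rw [add_sub_cancel_left, add_sub_cancel_left, mul_inv_cancel₀ ((map_ne_zero _).mpr hp₁)]
    rintro g (rfl | rfl)
    · rw [hf_wave, hg_wave α₁ _ hg₁]
      exact expWave_bilinear_DsDy hshift (mul_inv_cancel₀ hp₁) y s
    · rw [hf_wave, hg_wave α₂ _ hg₂]
      exact expWave_bilinear_DsDy hshift (mul_inv_cancel₀ hp₁) y s
  · rw [hf_wave, expWave_bilinear_Ds2, hg₁, hg₂, ofReal_norm_mul_exp_sq, ofReal_norm_mul_exp_sq,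
      norm_neg, norm_neg, hθ]
    linear_combination A * exp (q * y + r * s) * norm_pow_four_div_mul_inv_add_inv_sq hp₁ hq
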